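/- For any horizon T ≥ 1 and A ≥ 2 actions, there is a deterministic tree MDP in which no policy greedy with respect to Q^i is optimal for any i < T, where Q^1 is the Q-function of the uniformly random policy and Q^{i+1} = QVI(Q^i). Concretely, in the tree MDP where a single action sequence a_{1:T} yields terminal reward 1, and a different first action a₁' yields immediate reward 3/4 (with all other rewards 0), one has Q^i_t(s_{a_{1:t−1}}, a_t) = A^{−max{T−i−t+1, 0}} and Q^i_1(s₁, a₁') = 3/4, so for i < T the greedy policy takes a₁' at the first step and is suboptimal. -/

import Mathlib

open Finset Classical

/-- Total reward of playing a list of actions from state `s` in a deterministic MDP. -/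
def seqReturn {S : Type*} (A : ℕ) (f : S → Fin A → S) (R : S → Fin A → ℝ) :
    S → List (Fin A) → ℝ
  | _, [] => 0
  | s, a :: rest => R s a + seqReturn A f R (f s a) rest

/-- Value function of a (time-indexed, stochastic) policy by fuel recursion:
`polV A f R pi t n s` is the expected sum of the next `n` rewards from state `s`
at timestep `t` following `pi`. -/
noncomputable def polV {S : Type*} (A : ℕ) (f : S → Fin A → S) (R : S → Fin A → ℝ)
    (pi : ℕ → S → Fin A → ℝ) : ℕ → ℕ → S → ℝ
  | _, 0, _ => 0
  | t, n + 1, s => ∑ a : Fin A, pi t s a * (R s a + polV A f R pi (t + 1) n (f s a))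

/-- `Q^π_t(s,a)` in a horizon-`T` deterministic MDP. -/
noncomputable def polQ {S : Type*} (A T : ℕ) (f : S → Fin A → S) (R : S → Fin A → ℝ)
    (pi : ℕ → S → Fin A → ℝ) (t : ℕ) (s : S) (a : Fin A) : ℝ :=
  R s a + polV A f R pi (t + 1) (T - t) (f s a)

/-- Q-value-iteration iterates: `qIter ... Q1 0 = Q1`, `qIter ... Q1 (j+1) = QVI (qIter ... Q1 j)`,
where `QVI(Q)_t(s,a) = R(s,a) + max_{a'} Q_{t+1}(f(s,a), a')` (and `Q_{T+1} ≡ 0`). -/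
noncomputable def qIter {S : Type*} (A T : ℕ) (f : S → Fin A → S) (R : S → Fin A → ℝ)
    (Q1 : ℕ → S → Fin A → ℝ) : ℕ → ℕ → S → Fin A → ℝ
  | 0 => Q1
  | j + 1 => fun t s a =>
      R s a + if t < T then ⨆ a' : Fin A, qIter A T f R Q1 j (t + 1) (f s a) a' else 0

/-- Trajectory of a deterministic policy: `polState ... t` is the state at timestep `t+1`. -/
def polState {S : Type*} (A : ℕ) (f : S → Fin A → S) (p : ℕ → S → Fin A) (s1 : S) : ℕ → S
  | 0 => s1
  | t + 1 => f (polState A f p s1 t) (p (t + 1) (polState A f p s1 t))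

/-!
States that are not prefixes of the target sequence form an absorbing set on which every reward
vanishes, so all value functions are `0` there and an action leaving the target path is worth
exactly its immediate reward; in particular the distractor `a1'` is always worth `3/4`. Along the
path, the random policy collects the terminal reward with probability `A^{-(T-t)}`, and each QVI
sweep replaces the last averaging step by a maximum, removing one factor `1/A`. Hence for `i < T`
the first target action is worth at most `1/A ≤ 1/2 < 3/4`, the greedy policy leaves the path
at once and collects at most `3/4 < 1`.
-/

section AbsorbingSet

variable {S : Type*} {A T : ℕ} {f : S → Fin A → S} {R : S → Fin A → ℝ} {D : Set S}

theorem polV_eq_zero_of_mem (hD : ∀ s ∈ D, ∀ a, f s a ∈ D) (hR : ∀ s ∈ D, ∀ a, R s a = 0)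
    (pi : ℕ → S → Fin A → ℝ) (n : ℕ) : ∀ t, ∀ s ∈ D, polV A f R pi t n s = 0 := by
  induction n with
  | zero => exact fun _ _ _ => rfl
  | succ n ih =>
    intro t s hs
    simp [polV, hR s hs, ih _ _ (hD s hs _)]

theorem seqReturn_eq_zero_of_mem (hD : ∀ s ∈ D, ∀ a, f s a ∈ D)
    (hR : ∀ s ∈ D, ∀ a, R s a = 0) (l : List (Fin A)) : ∀ s ∈ D, seqReturn A f R s l = 0 := by
  induction l with
  | nil => exact fun _ _ => rfl
  | cons a l ih =>
    intro s hs
    simp [seqReturn, hR s hs, ih _ (hD s hs a)]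

theorem polQ_eq_reward_of_step_mem (hD : ∀ s ∈ D, ∀ a, f s a ∈ D)
    (hR : ∀ s ∈ D, ∀ a, R s a = 0) (pi : ℕ → S → Fin A → ℝ) {t : ℕ} {s : S} {a : Fin A}
    (h : f s a ∈ D) : polQ A T f R pi t s a = R s a := by
  simp [polQ, polV_eq_zero_of_mem hD hR pi _ _ _ h]

theorem qIter_polQ_eq_reward_of_step_mem (hD : ∀ s ∈ D, ∀ a, f s a ∈ D)
    (hR : ∀ s ∈ D, ∀ a, R s a = 0) (pi : ℕ → S → Fin A → ℝ) (m : ℕ) :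
    ∀ t s a, f s a ∈ D → qIter A T f R (polQ A T f R pi) m t s a = R s a := by
  induction m with
  | zero => exact fun _ _ _ h => polQ_eq_reward_of_step_mem hD hR pi h
  | succ m ih =>
    intro t s a h
    simp [qIter, ih _ _ _ (hD _ h _), hR _ h, Real.iSup_const_zero]

theorem qIter_polQ_eq_zero_of_mem (hD : ∀ s ∈ D, ∀ a, f s a ∈ D)
    (hR : ∀ s ∈ D, ∀ a, R s a = 0) (pi : ℕ → S → Fin A → ℝ) (m t : ℕ) {s : S} (hs : s ∈ D)
    (a : Fin A) : qIter A T f R (polQ A T f R pi) m t s a = 0 :=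
  (qIter_polQ_eq_reward_of_step_mem hD hR pi m t s a (hD s hs a)).trans (hR s hs a)

end AbsorbingSet

theorem ciSup_ite_eq_of_nonneg {ι α : Type*} [ConditionallyCompleteLattice α] [Zero α]
    [DecidableEq ι] (b : ι) {x : α} (hx : 0 ≤ x) : ⨆ i, (if i = b then x else 0) = x :=
  have : Nonempty ι := ⟨b⟩
  ciSup_eq_of_forall_le_of_forall_lt_exists_gt (fun i => by split_ifs <;> simp [hx])
    fun w hw => ⟨b, by simpa using hw⟩

namespace List

variable {α : Type*} {l : List α} {k : ℕ} {a : α}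

theorem take_append_singleton_prefix_iff (hk : k < l.length) :
    l.take k ++ [a] <+: l ↔ a = l[k] := by
  have hlen : (l.take k ++ [a]).length = k + 1 := by simp [hk.le]
  rw [prefix_iff_eq_take, hlen, ← take_concat_get' l k hk, append_cancel_left_eq, singleton_inj]

theorem take_append_singleton_eq_iff (hk : k < l.length) :
    l.take k ++ [a] = l ↔ k + 1 = l.length ∧ a = l[k] := by
  constructor
  · intro h
    refine ⟨by simpa [hk.le] using congrArg length h, ?_⟩
    exact (take_append_singleton_prefix_iff hk).1 (h.symm ▸ prefix_refl l)
  · rintro ⟨hlen, rfl⟩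
    rw [take_concat_get', hlen, take_length]

end List

abbrev treeStep {α : Type*} (s : List α) (a : α) : List α := s ++ [a]

theorem treeStep_not_prefix {α : Type*} (l : List α) :
    ∀ s ∈ {s | ¬ s <+: l}, ∀ a, treeStep s a ∈ {s | ¬ s <+: l} :=
  fun s hs a h => hs ((List.prefix_append s [a]).trans h)

section TreeMDP

variable {A T : ℕ} (tgt : Fin T → Fin A) (a1' : Fin A)

noncomputable def treeReward (s : List (Fin A)) (a : Fin A) : ℝ :=
  if s ++ [a] = List.ofFn tgt then 1 else if s = [] ∧ a = a1' then 3 / 4 else 0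

theorem take_ofFn_append_prefix_iff {j : ℕ} (hj : j < T) {a : Fin A} :
    (List.ofFn tgt).take j ++ [a] <+: List.ofFn tgt ↔ a = tgt ⟨j, hj⟩ := by
  rw [List.take_append_singleton_prefix_iff (by simpa using hj), List.getElem_ofFn]

theorem take_ofFn_append_tgt {j : ℕ} (hj : j < T) :
    (List.ofFn tgt).take j ++ [tgt ⟨j, hj⟩] = (List.ofFn tgt).take (j + 1) := by
  have h := List.take_concat_get' (List.ofFn tgt) j (by simpa using hj)
  rwa [List.getElem_ofFn] at h

theorem treeReward_eq_zero_of_not_prefix :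
    ∀ s ∈ {s | ¬ s <+: List.ofFn tgt}, ∀ a, treeReward tgt a1' s a = 0 := by
  intro s hs a
  have hL : s ++ [a] ≠ List.ofFn tgt := fun h => hs (h ▸ List.prefix_append s [a])
  have hnil : s ≠ [] := by rintro rfl; exact hs List.nil_prefix
  simp [treeReward, hL, hnil]

theorem treeReward_take {j : ℕ} (hj : j < T) {a : Fin A} (ha : j = 0 → a ≠ a1') :
    treeReward tgt a1' ((List.ofFn tgt).take j) a =
      if j + 1 = T ∧ a = tgt ⟨j, hj⟩ then 1 else 0 := by
  have hnil : (List.ofFn tgt).take j = [] → a ≠ a1' := by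
    simpa [List.take_eq_nil_iff, Nat.pos_iff_ne_zero.mp (j.zero_le.trans_lt hj)] using ha
  simp only [treeReward, List.take_append_singleton_eq_iff (l := List.ofFn tgt)
    (by simpa using hj), List.length_ofFn, List.getElem_ofFn]
  split_ifs <;> simp_all

theorem treeReward_add_polV_uniform_take (n : ℕ) :
    ∀ j t a (hj : j + n + 1 = T), (j = 0 → a ≠ a1') →
      treeReward tgt a1' ((List.ofFn tgt).take j) a +
          polV A treeStep (treeReward tgt a1') (fun _ _ _ => (A : ℝ)⁻¹) t n
            ((List.ofFn tgt).take j ++ [a]) =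
        if a = tgt ⟨j, by omega⟩ then (A : ℝ)⁻¹ ^ n else 0 := by
  induction n with
  | zero =>
    intro j t a hj ha
    simp [polV, treeReward_take tgt a1' (by omega) ha, show j + 1 = T by omega]
  | succ n ih =>
    intro j t a hj ha
    rw [treeReward_take tgt a1' (by omega) ha, if_neg (by omega), zero_add]
    split_ifs with hat
    · subst hat
      have hnext : ∀ a', (A : ℝ)⁻¹ * (treeReward tgt a1' ((List.ofFn tgt).take (j + 1)) a' +
          polV A treeStep (treeReward tgt a1') (fun _ _ _ => (A : ℝ)⁻¹) (t + 1) n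
            ((List.ofFn tgt).take (j + 1) ++ [a'])) =
          if a' = tgt ⟨j + 1, by omega⟩ then (A : ℝ)⁻¹ ^ (n + 1) else 0 := by
        intro a'
        rw [ih (j + 1) (t + 1) a' (by omega) (by omega)]
        split_ifs <;> ring
      simp only [polV, take_ofFn_append_tgt, hnext, Finset.sum_ite_eq', Finset.mem_univ, if_true]
    · exact polV_eq_zero_of_mem (treeStep_not_prefix _) (treeReward_eq_zero_of_not_prefix tgt a1')
        _ _ _ _ ((take_ofFn_append_prefix_iff tgt (by omega)).not.2 hat)

theorem qIter_uniform_take (m : ℕ) : ∀ j (hj : j < T) a, (j = 0 → a ≠ a1') →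
    qIter A T treeStep (treeReward tgt a1')
        (polQ A T treeStep (treeReward tgt a1') fun _ _ _ => (A : ℝ)⁻¹) m (j + 1)
        ((List.ofFn tgt).take j) a =
      if a = tgt ⟨j, hj⟩ then (A : ℝ)⁻¹ ^ (T - m - (j + 1)) else 0 := by
  induction m with
  | zero =>
    intro j hj a ha
    exact treeReward_add_polV_uniform_take tgt a1' _ j _ a (by omega) ha
  | succ m ih =>
    intro j hj a ha
    simp only [qIter, treeStep]
    rw [treeReward_take tgt a1' hj ha]
    by_cases hat : a = tgt ⟨j, hj⟩
    · subst hat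
      rw [take_ofFn_append_tgt]
      by_cases hjT : j + 1 < T
      · have hnext := fun a' => ih (j + 1) hjT a' fun h => absurd h (Nat.succ_ne_zero j)
        rw [if_pos hjT, if_neg (fun h => Nat.ne_of_lt hjT h.1), zero_add]
        simp only [hnext]
        rw [ciSup_ite_eq_of_nonneg _ (by positivity)]
        congr 1
        omega
      · simp [show j + 1 = T by omega]
    · have hoff := (take_ofFn_append_prefix_iff tgt hj).not.2 hat
      simp [hat, qIter_polQ_eq_zero_of_mem (treeStep_not_prefix _)
        (treeReward_eq_zero_of_not_prefix tgt a1') _ m _ hoff, Real.iSup_const_zero]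

theorem singleton_not_prefix_ofFn (hT : 1 ≤ T) {b : Fin A} (hb : b ≠ tgt ⟨0, hT⟩) :
    ¬ [b] <+: List.ofFn tgt := by
  simpa using (take_ofFn_append_prefix_iff tgt hT).not.2 hb

theorem treeReward_nil (hT : 1 ≤ T) {b : Fin A} (hb : b ≠ tgt ⟨0, hT⟩) :
    treeReward tgt a1' [] b = if b = a1' then 3 / 4 else 0 := by
  have hL : [b] ≠ List.ofFn tgt := fun h =>
    singleton_not_prefix_ofFn tgt hT hb (h ▸ List.prefix_refl _)
  simp [treeReward, hL]

theorem qIter_uniform_distractor (hT : 1 ≤ T) (hne : a1' ≠ tgt ⟨0, hT⟩) (m : ℕ) :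
    qIter A T treeStep (treeReward tgt a1')
      (polQ A T treeStep (treeReward tgt a1') fun _ _ _ => (A : ℝ)⁻¹) m 1 [] a1' = 3 / 4 := by
  rw [qIter_polQ_eq_reward_of_step_mem (treeStep_not_prefix _)
    (treeReward_eq_zero_of_not_prefix tgt a1') _ m 1 [] a1'
    (singleton_not_prefix_ofFn tgt hT hne), treeReward_nil tgt a1' hT hne, if_pos rfl]

theorem seqReturn_cons_le (hT : 1 ≤ T) {b : Fin A} (hb : b ≠ tgt ⟨0, hT⟩) (l : List (Fin A)) :
    seqReturn A treeStep (treeReward tgt a1') [] (b :: l) ≤ 3 / 4 := by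
  rw [seqReturn, seqReturn_eq_zero_of_mem (treeStep_not_prefix _)
    (treeReward_eq_zero_of_not_prefix tgt a1') _ (treeStep [] b)
    (singleton_not_prefix_ofFn tgt hT hb), add_zero, treeReward_nil tgt a1' hT hb]
  split_ifs <;> norm_num

theorem seqReturn_take_drop_eq (hT : 1 ≤ T) (hne : a1' ≠ tgt ⟨0, hT⟩) {j : ℕ} (hj : j < T) :
    seqReturn A treeStep (treeReward tgt a1') ((List.ofFn tgt).take j) ((List.ofFn tgt).drop j) =
      (if j + 1 = T then 1 else 0) +
        seqReturn A treeStep (treeReward tgt a1') ((List.ofFn tgt).take (j + 1))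
          ((List.ofFn tgt).drop (j + 1)) := by
  rw [List.drop_eq_getElem_cons (by simpa using hj), seqReturn, List.getElem_ofFn, treeStep,
    take_ofFn_append_tgt, treeReward_take tgt a1' hj (by rintro rfl; exact hne.symm)]
  simp only [and_true]

theorem seqReturn_take_drop (hT : 1 ≤ T) (hne : a1' ≠ tgt ⟨0, hT⟩) (n : ℕ) :
    ∀ j, j + n + 1 = T →
      seqReturn A treeStep (treeReward tgt a1') ((List.ofFn tgt).take j)
        ((List.ofFn tgt).drop j) = 1 := by
  induction n with
  | zero =>
    intro j hj
    rw [seqReturn_take_drop_eq tgt a1' hT hne (by omega), if_pos (by omega),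
      List.drop_eq_nil_of_le (by simp; omega), seqReturn, add_zero]
  | succ n ih =>
    intro j hj
    rw [seqReturn_take_drop_eq tgt a1' hT hne (by omega), if_neg (by omega),
      ih (j + 1) (by omega), zero_add]

theorem seqReturn_ofFn_tgt (hT : 1 ≤ T) (hne : a1' ≠ tgt ⟨0, hT⟩) :
    seqReturn A treeStep (treeReward tgt a1') [] (List.ofFn tgt) = 1 := by
  simpa using seqReturn_take_drop tgt a1' hT hne (T - 1) 0 (by omega)

end TreeMDP

theorem inv_pow_lt_three_quarters {A e : ℕ} (hA : 2 ≤ A) (he : 1 ≤ e) :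
    (A : ℝ)⁻¹ ^ e < 3 / 4 :=
  calc (A : ℝ)⁻¹ ^ e ≤ (A : ℝ)⁻¹ := pow_le_of_le_one (by positivity)
          (inv_le_one_of_one_le₀ (by exact_mod_cast (by omega : 1 ≤ A))) (by omega)
    _ ≤ 2⁻¹ := inv_anti₀ (by norm_num) (by exact_mod_cast hA)
    _ < 3 / 4 := by norm_num

/--
For any horizon `T ≥ 1` and `A ≥ 2` actions, in the tree MDP whose states
are action histories (`f s a = s ++ [a]`), where the single action sequence `tgt` yields
terminal reward `1` and a different first action `a1' ≠ tgt 0` yields immediate reward `3/4`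
(all other rewards `0`), the QVI iterates `Q^i` of the uniformly random policy's Q-function
satisfy, for `1 ≤ i ≤ T` and `1 ≤ t ≤ T`:
`Q^i_t(s_{tgt_{1:t−1}}, tgt_t) = A^{−max{T−i−t+1,0}}` and `Q^i_1(s₁, a1') = 3/4`;
consequently, for `i < T` every policy greedy with respect to `Q^i` is suboptimal
(its return from the start state is strictly less than the target sequence's return).
-/
theorem no_greedy_policy_optimal_before_T
    (T A : ℕ) (hT : 1 ≤ T) (hA : 2 ≤ A)
    (tgt : Fin T → Fin A) (a1' : Fin A) (hne : a1' ≠ tgt ⟨0, hT⟩) :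
    -- the tree MDP
    ∀ (f : List (Fin A) → Fin A → List (Fin A))
      (R : List (Fin A) → Fin A → ℝ),
      (f = fun s a => s ++ [a]) →
      (R = fun s a =>
        if s ++ [a] = List.ofFn tgt then 1
        else if s = [] ∧ a = a1' then 3 / 4 else 0) →
      -- Q¹ is the uniformly random policy's Q-function, Qⁱ⁺¹ = QVI(Qⁱ)
      ∀ Q : ℕ → ℕ → List (Fin A) → Fin A → ℝ,
      (∀ i, Q i = qIter A T f R
          (polQ A T f R (fun _ _ _ => (A : ℝ)⁻¹)) (i - 1)) →
      -- (a) on-target Q-values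
      (∀ i t (hi : 1 ≤ i) (hiT : i ≤ T) (ht : 1 ≤ t) (htT : t ≤ T),
          Q i t ((List.ofFn tgt).take (t - 1)) (tgt ⟨t - 1, by omega⟩)
            = ((A : ℝ))⁻¹ ^ (T + 1 - i - t)) ∧
      -- (b) the distractor's Q-value
      (∀ i, 1 ≤ i → Q i 1 [] a1' = 3 / 4) ∧
      -- (c) for i < T, no policy greedy w.r.t. Qⁱ is optimal
      (∀ i, 1 ≤ i → i < T →
        ∀ p : ℕ → List (Fin A) → Fin A,
          (∀ t s a, 1 ≤ t → t ≤ T → Q i t s a ≤ Q i t s (p t s)) →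
          seqReturn A f R []
              (List.ofFn (fun j : Fin T => p (j + 1) (polState A f p [] j)))
            < seqReturn A f R [] (List.ofFn tgt)) := by
  intro f R hf hR Q hQ
  obtain rfl : f = treeStep := hf
  obtain rfl : R = treeReward tgt a1' := hR
  have hne' : ∀ j (hj : j < T), j = 0 → tgt ⟨j, hj⟩ ≠ a1' := by rintro j hj rfl; exact hne.symm
  have hdistractor : ∀ i, Q i 1 [] a1' = 3 / 4 := fun i => by
    rw [hQ]; exact qIter_uniform_distractor tgt a1' hT hne _
  refine ⟨fun i t hi hiT ht htT => ?_, fun i _ => hdistractor i, fun i hi hiT p hp => ?_⟩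
  · obtain ⟨j, rfl⟩ : ∃ j, t = j + 1 := ⟨t - 1, by omega⟩
    rw [hQ, show T + 1 - i - (j + 1) = T - (i - 1) - (j + 1) by omega]
    simpa using qIter_uniform_take tgt a1' (i - 1) j (by omega) _ (hne' j _)
  · have hgreedy : p 1 [] ≠ tgt ⟨0, hT⟩ := by
      intro h
      have hfirst := qIter_uniform_take tgt a1' (i - 1) 0 hT _ (hne' 0 hT)
      rw [List.take_zero, zero_add, if_pos rfl] at hfirst
      have hle := hp 1 [] a1' le_rfl hT
      rw [h, hdistractor, hQ, hfirst] at hle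
      exact (inv_pow_lt_three_quarters hA (by omega)).not_ge hle
    obtain ⟨T', rfl⟩ : ∃ T', T = T' + 1 := ⟨T - 1, by omega⟩
    rw [seqReturn_ofFn_tgt tgt a1' hT hne, List.ofFn_succ]
    exact (seqReturn_cons_le tgt a1' hT hgreedy _).trans_lt (by norm_num)
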